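/- Let m, n be nonzero integers with |m| < |n|, and let ℓ be a standard line in BS(m,n). Then ℓ is an a-line (i.e., a left coset of ⟨a⟩) if and only if there exists a finite set S of standard lines of BS(m,n) such that: every member of S is disjoint from ℓ; for every member s of S there exists a standard line that intersects both s and ℓ; and every standard line that intersects ℓ and is distinct from ℓ also intersects some member of S. -/

import Mathlib

/-!
For an `a`-line `g⟨a⟩`, the relation `a^n t = t a^m` shows that every `t`-line crossing it
passes through one of the `|n|` lines `g a^r t⟨a⟩`, `0 ≤ r < |n|`, which form the cover.

For a `t`-line `g⟨t⟩` no finite cover exists. The `a`-lines `g t^k⟨a⟩` all cross it. Since the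
`t`-exponent is constant on `a`-lines, an `a`-line of the cover meets at most one of them. In the
affine action of `BS(m,n)` on `ℚ` (`a : x ↦ x + 1`, `t : x ↦ (n/m) x`), a `t`-line `h⟨t⟩` of
the cover meeting `g t^k⟨a⟩` at `g t^k a^i` (so `i ≠ 0`, as `h⟨t⟩` misses `g⟨t⟩`) forces
`(n/m)^k i` to be a constant, so `|n/m| > 1` bounds `k`. Hence some `g t^k⟨a⟩` misses the whole
cover.
-/

/-- The single defining relator `t a^m t⁻¹ (a^n)⁻¹` of the Baumslag–Solitar group `BS(m,n)`,
as an element of the free group on `Bool`, where `false` stands for the generator `a` and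
`true` for the generator `t`. -/
def bsRel (m n : ℤ) : FreeGroup Bool :=
  FreeGroup.of true * FreeGroup.of false ^ m * (FreeGroup.of true)⁻¹ *
    (FreeGroup.of false ^ n)⁻¹

/-- The Baumslag–Solitar group `BS(m,n) = ⟨a, t ∣ t a^m t⁻¹ = a^n⟩`. -/
abbrev BS (m n : ℤ) : Type := PresentedGroup ({bsRel m n} : Set (FreeGroup Bool))

/-- The generator `a` of `BS(m,n)`. -/
def BS.a (m n : ℤ) : BS m n := PresentedGroup.of false

/-- The generator `t` (stable letter) of `BS(m,n)`. -/
def BS.t (m n : ℤ) : BS m n := PresentedGroup.of true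

/-- The `a`-line through `g` in `BS(m,n)`: the left coset `g⟨a⟩`. -/
def aLine (m n : ℤ) (g : BS m n) : Set (BS m n) := {x | ∃ i : ℤ, x = g * BS.a m n ^ i}

/-- The `t`-line through `g` in `BS(m,n)`: the left coset `g⟨t⟩`. -/
def tLine (m n : ℤ) (g : BS m n) : Set (BS m n) := {x | ∃ i : ℤ, x = g * BS.t m n ^ i}

/-- A standard line in `BS(m,n)` is an `a`-line or a `t`-line. -/
def IsStandardLine (m n : ℤ) (ℓ : Set (BS m n)) : Prop :=
  (∃ g, ℓ = aLine m n g) ∨ (∃ g, ℓ = tLine m n g)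

/-- A map `BS(m,n) → BS(m',n')` is line-preserving if the image of every standard line is a
standard line. -/
def LinePreserving {m n m' n' : ℤ} (φ : BS m n → BS m' n') : Prop :=
  ∀ ℓ : Set (BS m n), IsStandardLine m n ℓ → IsStandardLine m' n' (φ '' ℓ)


namespace BS

variable {m n : ℤ}

theorem t_mul_a_zpow_mul_t_inv : t m n * a m n ^ m * (t m n)⁻¹ = a m n ^ n := by
  have h := PresentedGroup.one_of_mem (Set.mem_singleton (bsRel m n))
  rw [bsRel, map_mul, map_mul, map_mul, map_inv, map_inv, map_zpow, map_zpow] at h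
  exact mul_inv_eq_one.mp h

theorem a_zpow_mul_t_eq_t_mul_a_zpow (d : ℤ) :
    a m n ^ (n * d) * t m n = t m n * a m n ^ (m * d) := by
  rw [zpow_mul, ← t_mul_a_zpow_mul_t_inv, conj_zpow, ← zpow_mul]
  group

theorem exists_a_zpow_mul_t_eq (i : ℤ) :
    ∃ c : ℤ, a m n ^ i * t m n = a m n ^ (i % n) * t m n * a m n ^ c :=
  ⟨m * (i / n), by
    rw [mul_assoc, ← a_zpow_mul_t_eq_t_mul_a_zpow, ← mul_assoc, ← zpow_add, Int.emod_add_mul_ediv]⟩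

def tExp : BS m n →* Multiplicative ℤ :=
  PresentedGroup.toGroup (f := fun b => if b then Multiplicative.ofAdd 1 else 1) <| by
    rintro r rfl
    simp [bsRel]

@[simp] theorem tExp_a : tExp (a m n) = 1 := by
  simp [tExp, BS.a, PresentedGroup.toGroup.of]

@[simp] theorem tExp_t : tExp (t m n) = Multiplicative.ofAdd 1 := by
  simp [tExp, BS.t, PresentedGroup.toGroup.of]

def toAffine (hm : m ≠ 0) (hn : n ≠ 0) : BS m n →* ℚ ≃ᵃ[ℚ] ℚ :=
  PresentedGroup.toGroup (f := fun b : Bool => if b then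
      AffineEquiv.homothetyUnitsMulHom (0 : ℚ) (Units.mk0 ((n : ℚ) / m) (by simp [hm, hn]))
    else AffineEquiv.constVAdd ℚ ℚ (1 : ℚ)) <| by
    rintro r rfl
    ext x
    simp [bsRel, ← AffineEquiv.constVAdd_zsmul, AffineEquiv.inv_def, AffineMap.homothety_apply]
    field_simp
    ring

theorem toAffine_a_zpow_apply (hm : m ≠ 0) (hn : n ≠ 0) (i : ℤ) (x : ℚ) :
    toAffine hm hn (a m n ^ i) x = i + x := by
  simp [toAffine, BS.a, PresentedGroup.toGroup.of, ← AffineEquiv.constVAdd_zsmul]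

theorem toAffine_t_zpow_apply (hm : m ≠ 0) (hn : n ≠ 0) (k : ℤ) (x : ℚ) :
    toAffine hm hn (t m n ^ k) x = ((n : ℚ) / m) ^ k * x := by
  rw [map_zpow]
  simp [toAffine, BS.t, PresentedGroup.toGroup.of, ← map_zpow, AffineMap.homothety_apply]

theorem a_ne_one (hm : m ≠ 0) (hn : n ≠ 0) : a m n ≠ 1 := by
  intro h
  have := toAffine_a_zpow_apply hm hn 1 0
  simp [h] at this

theorem mem_aLine_self (g : BS m n) : g ∈ aLine m n g := ⟨0, by simp⟩

theorem mem_tLine_self (g : BS m n) : g ∈ tLine m n g := ⟨0, by simp⟩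

theorem aLine_eq_of_mem {g x : BS m n} (hx : x ∈ aLine m n g) : aLine m n x = aLine m n g := by
  obtain ⟨i, rfl⟩ := hx
  ext y
  constructor
  · rintro ⟨j, rfl⟩
    exact ⟨i + j, by rw [zpow_add, mul_assoc]⟩
  · rintro ⟨j, rfl⟩
    exact ⟨j - i, by group⟩

theorem tExp_of_mem_aLine {g x : BS m n} (hx : x ∈ aLine m n g) : tExp x = tExp g := by
  obtain ⟨i, rfl⟩ := hx
  simp

theorem aLine_ne_tLine (hm : m ≠ 0) (hn : n ≠ 0) (g h : BS m n) : aLine m n g ≠ tLine m n h := by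
  intro hgh
  obtain ⟨j, hj⟩ : g ∈ tLine m n h := hgh ▸ mem_aLine_self g
  obtain ⟨l, hl⟩ : g * a m n ∈ tLine m n h := hgh ▸ ⟨1, by simp⟩
  have ha : a m n = t m n ^ (l - j) := by
    rw [← mul_right_inj g, hl, hj]
    group
  have hlj : 0 = l - j := by simpa using congrArg (Multiplicative.toAdd ∘ tExp) ha
  exact a_ne_one hm hn (by rw [ha, ← hlj, zpow_zero])

theorem bddAbove_setOf_zpow_le {K : Type*} [Field K] [LinearOrder K] [IsStrictOrderedRing K]
    [Archimedean K] {r : K} (hr : 1 < r) (C : K) : BddAbove {k : ℤ | r ^ k ≤ C} := by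
  obtain ⟨N, hN⟩ := pow_unbounded_of_one_lt C hr
  refine ⟨N, fun k hk => ?_⟩
  by_contra! hNk
  have := zpow_lt_zpow_right₀ hr hNk
  rw [zpow_natCast] at this
  exact (hN.trans this).not_ge hk

theorem bddAbove_aLine_zpow_meets_aLine (g h : BS m n) :
    BddAbove {k : ℤ | (aLine m n (g * t m n ^ k) ∩ aLine m n h).Nonempty} := by
  refine ⟨Multiplicative.toAdd (tExp h) - Multiplicative.toAdd (tExp g), ?_⟩
  rintro k ⟨x, hxk, hxh⟩
  have hk := congrArg Multiplicative.toAdd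
    ((tExp_of_mem_aLine hxk).symm.trans (tExp_of_mem_aLine hxh))
  simp at hk
  omega

theorem bddAbove_aLine_zpow_meets_tLine (hm : m ≠ 0) (hmn : |m| < |n|) {g h : BS m n}
    (hgh : tLine m n h ∩ tLine m n g = ∅) :
    BddAbove {k : ℤ | (aLine m n (g * t m n ^ k) ∩ tLine m n h).Nonempty} := by
  have hn : n ≠ 0 := abs_pos.mp ((abs_nonneg m).trans_lt hmn)
  have hr : 1 < |(n : ℚ) / m| := by
    rw [abs_div, one_lt_div (by positivity)]
    exact_mod_cast hmn
  refine (bddAbove_setOf_zpow_le hr |(toAffine hm hn g).symm (toAffine hm hn h 0)|).mono ?_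
  rintro k ⟨x, ⟨i, rfl⟩, ⟨j, hj⟩⟩
  have hi : i ≠ 0 := by
    rintro rfl
    exact (Set.eq_empty_iff_forall_notMem.mp hgh) (g * t m n ^ k)
      ⟨⟨j, by simpa using hj⟩, ⟨k, rfl⟩⟩
  -- evaluate both sides at `0`, which `t` fixes
  have hc : ((n : ℚ) / m) ^ k * i = (toAffine hm hn g).symm (toAffine hm hn h 0) := by
    have := congrArg (fun y => toAffine hm hn y 0) hj
    simp only [map_mul, AffineEquiv.coe_mul, Function.comp_apply, toAffine_a_zpow_apply,
      toAffine_t_zpow_apply, add_zero, mul_zero] at this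
    rw [← this, AffineEquiv.symm_apply_apply]
  calc |(n : ℚ) / m| ^ k ≤ |(n : ℚ) / m| ^ k * |(i : ℚ)| :=
        le_mul_of_one_le_right (by positivity) (by exact_mod_cast Int.one_le_abs hi)
    _ = |(toAffine hm hn g).symm (toAffine hm hn h 0)| := by rw [← hc, abs_mul, abs_zpow]

theorem exists_aLine_zpow_avoiding (hm : m ≠ 0) (hmn : |m| < |n|) (g : BS m n)
    {S : Set (Set (BS m n))} (hS : S.Finite) (hstd : ∀ s ∈ S, IsStandardLine m n s)
    (hdisj : ∀ s ∈ S, s ∩ tLine m n g = ∅) :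
    ∃ k : ℤ, ∀ s ∈ S, ¬(aLine m n (g * t m n ^ k) ∩ s).Nonempty := by
  have hbdd : BddAbove (⋃ s ∈ S, {k : ℤ | (aLine m n (g * t m n ^ k) ∩ s).Nonempty}) := by
    refine hS.bddAbove_biUnion.mpr fun s hs => ?_
    rcases hstd s hs with ⟨h, rfl⟩ | ⟨h, rfl⟩
    · exact bddAbove_aLine_zpow_meets_aLine g h
    · exact bddAbove_aLine_zpow_meets_tLine hm hmn (hdisj _ hs)
  obtain ⟨B, hB⟩ := hbdd
  refine ⟨B + 1, fun s hs hmeet => ?_⟩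
  have := hB (Set.mem_biUnion hs hmeet)
  omega

def HasFiniteCrossingCover (ℓ : Set (BS m n)) : Prop :=
  ∃ S : Set (Set (BS m n)), S.Finite ∧ (∀ s ∈ S, IsStandardLine m n s) ∧
    (∀ s ∈ S, s ∩ ℓ = ∅) ∧
    (∀ s ∈ S, ∃ ℓ' : Set (BS m n), IsStandardLine m n ℓ' ∧
      (ℓ' ∩ s).Nonempty ∧ (ℓ' ∩ ℓ).Nonempty) ∧
    (∀ ℓ' : Set (BS m n), IsStandardLine m n ℓ' → ℓ' ≠ ℓ → (ℓ' ∩ ℓ).Nonempty →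
      ∃ s ∈ S, (ℓ' ∩ s).Nonempty)

theorem not_hasFiniteCrossingCover_tLine (hm : m ≠ 0) (hmn : |m| < |n|) (g : BS m n) :
    ¬HasFiniteCrossingCover (tLine m n g) := by
  rintro ⟨S, hS, hstd, hdisj, -, hcover⟩
  have hn : n ≠ 0 := abs_pos.mp ((abs_nonneg m).trans_lt hmn)
  obtain ⟨k, hk⟩ := exists_aLine_zpow_avoiding hm hmn g hS hstd hdisj
  obtain ⟨s, hs, hmeet⟩ := hcover _ (Or.inl ⟨_, rfl⟩) (aLine_ne_tLine hm hn _ g)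
    ⟨g * t m n ^ k, mem_aLine_self _, ⟨k, rfl⟩⟩
  exact hk s hs hmeet

theorem hasFiniteCrossingCover_aLine (hn : n ≠ 0) (g : BS m n) :
    HasFiniteCrossingCover (aLine m n g) := by
  refine ⟨(fun r : ℤ => aLine m n (g * a m n ^ r * t m n)) '' Set.Ico 0 |n|,
    (Set.finite_Ico _ _).image _, ?_, ?_, ?_, ?_⟩
  · rintro _ ⟨r, -, rfl⟩
    exact Or.inl ⟨_, rfl⟩
  · rintro _ ⟨r, -, rfl⟩
    refine Set.eq_empty_of_forall_notMem fun x ⟨hxs, hxg⟩ => ?_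
    have hexp := (tExp_of_mem_aLine hxs).symm.trans (tExp_of_mem_aLine hxg)
    simp at hexp
  · rintro _ ⟨r, -, rfl⟩
    exact ⟨tLine m n (g * a m n ^ r), Or.inr ⟨_, rfl⟩,
      ⟨_, ⟨1, by rw [zpow_one]⟩, mem_aLine_self _⟩, ⟨_, mem_tLine_self _, ⟨r, rfl⟩⟩⟩
  · rintro ℓ' (⟨h, rfl⟩ | ⟨h, rfl⟩) hne ⟨x, hxh, hxg⟩
    · exact absurd ((aLine_eq_of_mem hxh).symm.trans (aLine_eq_of_mem hxg)) hne
    · obtain ⟨j, rfl⟩ := hxh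
      obtain ⟨i, hi⟩ := hxg
      obtain ⟨c, hc⟩ := exists_a_zpow_mul_t_eq (m := m) i
      refine ⟨_, ⟨i % n, ⟨Int.emod_nonneg i hn, Int.emod_lt_abs i hn⟩, rfl⟩,
        h * t m n ^ (j + 1), ⟨j + 1, rfl⟩, c, ?_⟩
      rw [zpow_add_one, ← mul_assoc, hi, mul_assoc, hc]
      simp only [mul_assoc]

end BS

/-- In `BS(m,n)` with `0 ≠ |m| < |n|`, a standard line `ℓ` is an `a`-line
if and only if there is a finite set `S` of standard lines, each disjoint from `ℓ` but joined
to `ℓ` by some standard line, such that every standard line distinct from `ℓ` that intersects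
`ℓ` also intersects a member of `S`. -/
theorem aLine_characterization (m n : ℤ) (hm : m ≠ 0) (hn : n ≠ 0) (hmn : |m| < |n|)
    (ℓ : Set (BS m n)) (hℓ : IsStandardLine m n ℓ) :
    (∃ g, ℓ = aLine m n g) ↔
      ∃ S : Set (Set (BS m n)), S.Finite ∧ (∀ s ∈ S, IsStandardLine m n s) ∧
        (∀ s ∈ S, s ∩ ℓ = ∅) ∧
        (∀ s ∈ S, ∃ ℓ' : Set (BS m n), IsStandardLine m n ℓ' ∧
          (ℓ' ∩ s).Nonempty ∧ (ℓ' ∩ ℓ).Nonempty) ∧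
        (∀ ℓ' : Set (BS m n), IsStandardLine m n ℓ' → ℓ' ≠ ℓ → (ℓ' ∩ ℓ).Nonempty →
          ∃ s ∈ S, (ℓ' ∩ s).Nonempty) := by
  change _ ↔ BS.HasFiniteCrossingCover ℓ
  refine ⟨fun ⟨g, hg⟩ => hg ▸ BS.hasFiniteCrossingCover_aLine hn g, fun hcover => ?_⟩
  rcases hℓ with hline | ⟨g, rfl⟩
  · exact hline
  · exact absurd hcover (BS.not_hasFiniteCrossingCover_tLine hm hmn g)
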